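/- Let F(X) = (X² - U)/(2X - T) be the Newton iterator of X² - TX + U in Q(T,U), and define a₀ = 0, a_n = U^{-1}T for odd n ≥ 1, a_n = -T for even n ≥ 2. Then for all n ≥ 0, the n-fold Newton iterate satisfies F^{(n)}(0) = [a₀; a₁, a₂, …, a_{2^n - 1}] as rational functions in Q(T,U), where the right side is the finite continued fraction with partial denominators a₀, …, a_{2^n - 1}. -/

import Mathlib

noncomputable section
namespace Paper
open MvPolynomial Finset

abbrev K : Type := FractionRing (MvPolynomial (Fin 2) ℚ)

def T : K := algebraMap (MvPolynomial (Fin 2) ℚ) K (X 0)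
def U : K := algebraMap (MvPolynomial (Fin 2) ℚ) K (X 1)

/-- The Newton iterator of `f = X² - T·X + U`. -/
def F (x : K) : K := (x ^ 2 - U) / (2 * x - T)

/-- `h 0 = T`, `h (n+1) = h n ² - 2 U^(2^n)`. -/
def h : ℕ → K
  | 0 => T
  | n + 1 => h n ^ 2 - 2 * U ^ 2 ^ n

/-- Partial denominators: `a 0 = 0`, `a n = U⁻¹T` for odd `n`, `a n = -T` for even `n ≥ 2`. -/
def a (n : ℕ) : K := if n = 0 then 0 else if Odd n then U⁻¹ * T else -T

/-- Partial denominators: `b n = T` for even `n`, `b n = -U⁻¹T` for odd `n`. -/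
def b (n : ℕ) : K := if Odd n then -(U⁻¹ * T) else T

/-- Continuant numerators, shifted by 2: `P k = p_{k-2}`, so `P 0 = p_{-2} = 0`,
`P 1 = p_{-1} = 1`, `P (n+2) = p_n = a n • p_{n-1} + p_{n-2}`. -/
def P : ℕ → K
  | 0 => 0
  | 1 => 1
  | n + 2 => a n * P (n + 1) + P n

/-- Continuant denominators, shifted by 2: `Q k = q_{k-2}`. -/
def Q : ℕ → K
  | 0 => 1
  | 1 => 0
  | n + 2 => a n * Q (n + 1) + Q n

/-- Continuant numerators for the `b`-continued fraction, shifted by 2: `R k = r_{k-2}`. -/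
def R : ℕ → K
  | 0 => 0
  | 1 => 1
  | n + 2 => b n * R (n + 1) + R n

/-- Continuant denominators for the `b`-continued fraction, shifted by 2: `Sd k = s_{k-2}`. -/
def Sd : ℕ → K
  | 0 => 1
  | 1 => 0
  | n + 2 => b n * Sd (n + 1) + Sd n

/-- The finite continued fraction `[x₀; x₁, …, x_m] = x₀ + 1/(x₁ + 1/(⋯ + 1/x_m))`
of a list `[x₀, x₁, …, x_m]`. -/
def cfList : List K → K
  | [] => 0
  | [x] => x
  | x :: y :: xs => x + (cfList (y :: xs))⁻¹

/-! ### Auxiliary development -/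

/-- The Lucas-type sequence `s` at the polynomial level. -/
def sp : ℕ → MvPolynomial (Fin 2) ℚ
  | 0 => 0
  | 1 => 1
  | n + 2 => X 0 * sp (n + 1) - X 1 * sp n

/-- The Lucas-type sequence: `s 0 = 0`, `s 1 = 1`, `s (n+2) = T s(n+1) - U s n`. -/
def s : ℕ → K
  | 0 => 0
  | 1 => 1
  | n + 2 => T * s (n + 1) - U * s n

lemma s_eq_sp (m : ℕ) : s m = algebraMap (MvPolynomial (Fin 2) ℚ) K (sp m) := by
  induction m using Nat.twoStepInduction with
  | zero => simp [s, sp]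
  | one => simp [s, sp]
  | more n ih1 ih2 =>
      simp only [s, sp, map_sub, map_mul, ih1, ih2, T, U]

lemma eval_sp (m : ℕ) : eval (fun i : Fin 2 => if i = 0 then (2 : ℚ) else 1) (sp m) = m := by
  induction m using Nat.twoStepInduction with
  | zero => simp [sp]
  | one => simp [sp]
  | more n ih1 ih2 =>
      simp only [sp, map_sub, map_mul, eval_X, ih1, ih2]
      norm_num
      ring

lemma s_ne_zero {m : ℕ} (hm : 1 ≤ m) : s m ≠ 0 := by
  rw [s_eq_sp]
  intro hcon
  have h0 : sp m = 0 := by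
    apply IsFractionRing.injective (MvPolynomial (Fin 2) ℚ) K
    simpa using hcon
  have h2 := eval_sp m
  rw [h0] at h2
  simp at h2
  have : m = 0 := by exact_mod_cast h2.symm
  omega

lemma U_ne_zero : U ≠ 0 := by
  intro hcon
  have h0 : (X 1 : MvPolynomial (Fin 2) ℚ) = 0 := by
    apply IsFractionRing.injective (MvPolynomial (Fin 2) ℚ) K
    simpa [U] using hcon
  exact MvPolynomial.X_ne_zero 1 h0

lemma s_add (k : ℕ) : ∀ m, s (m + k + 1) = s (m + 1) * s (k + 1) - U * s m * s k := by
  induction k using Nat.twoStepInduction with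
  | zero => intro m; simp [s]
  | one => intro m; show s (m + 2) = _; simp [s]; ring
  | more k ih1 ih2 =>
      intro m
      have e1 : m + (k + 2) + 1 = (m + k + 1) + 2 := by ring
      rw [e1]
      show T * s (m + k + 1 + 1) - U * s (m + k + 1) = _
      have e2 : m + k + 1 + 1 = m + (k+1) + 1 := by ring
      rw [e2, ih2, ih1]
      show _ = s (m+1) * (T * s (k + 2) - U * s (k+1)) - U * s m * (T * s (k+1) - U * s k)
      ring

lemma cfList_cons (x : K) (xs : List K) : cfList (x :: xs) = x + (cfList xs)⁻¹ := by
  cases xs with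
  | nil => simp [cfList]
  | cons y ys => rfl

lemma a_odd {j : ℕ} (hj : Odd j) : a j = U⁻¹ * T := by
  have : j ≠ 0 := by rintro rfl; simp at hj
  simp [a, this, hj]

lemma a_even {j : ℕ} (hj0 : j ≠ 0) (hj : ¬ Odd j) : a j = -T := by
  simp [a, hj0, hj]

lemma tail_val (L : ℕ) : ∀ j, 1 ≤ j →
    cfList ((List.range' j L).map a) =
      if Odd j then s (L + 1) / (U * s L) else -(s (L + 1) / s L) := by
  induction L with
  | zero =>
      intro j hj
      simp [cfList, s]
  | succ L ih =>
      intro j hj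
      rw [List.range'_succ, List.map_cons, cfList_cons, ih (j + 1) (by omega)]
      have hsL1 : s (L + 1) ≠ 0 := s_ne_zero (by omega)
      have hU : U ≠ 0 := U_ne_zero
      have hs2 : s (L + 2) = T * s (L + 1) - U * s L := rfl
      rcases Nat.even_or_odd j with hje | hjo
      · have h1 : ¬ Odd j := Nat.not_odd_iff_even.mpr hje
        have h2 : Odd (j + 1) := Even.add_one hje
        rw [if_neg h1, if_pos h2, a_even (by omega) h1, inv_div]
        show -T + U * s L / s (L + 1) = -(s (L + 2) / s (L + 1))
        rw [hs2]
        field_simp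
        ring
      · have h1 : ¬ Odd (j + 1) := by simp [Nat.odd_add_one, Nat.not_even_iff_odd, hjo]
        rw [if_pos hjo, if_neg h1, a_odd hjo, inv_neg, inv_div]
        show U⁻¹ * T + -(s L / s (L + 1)) = s (L + 2) / (U * s (L + 1))
        rw [hs2]
        field_simp
        ring

lemma cf_val (m : ℕ) (hm : 1 ≤ m) :
    cfList ((List.range m).map a) = U * s (m - 1) / s m := by
  obtain ⟨k, rfl⟩ : ∃ k, m = k + 1 := ⟨m - 1, by omega⟩
  rw [List.range_eq_range', List.range'_succ, List.map_cons, cfList_cons]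
  have h1 : (0 : ℕ) + 1 = 1 := rfl
  rw [h1, tail_val k 1 le_rfl, if_pos (by norm_num : Odd 1)]
  have ha0 : a 0 = 0 := by simp [a]
  rw [ha0, inv_div, zero_add, Nat.add_sub_cancel]

lemma F_step (k : ℕ) : F (U * s k / s (k + 1)) = U * s (2 * k + 1) / s (2 * k + 2) := by
  have h1 : s (2 * k + 1) = s (k + 1) * s (k + 1) - U * s k * s k := by
    have e : 2 * k + 1 = k + k + 1 := by ring
    rw [e, s_add]
  have h2 : s (2 * k + 2) = s (k + 1) * (T * s (k + 1) - 2 * (U * s k)) := by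
    have e : 2 * k + 2 = k + (k + 1) + 1 := by ring
    rw [e, s_add]
    have e2 : s (k + 1 + 1) = T * s (k + 1) - U * s k := rfl
    rw [e2]; ring
  have hq : s (k + 1) ≠ 0 := s_ne_zero (by omega)
  have h2m : s (2 * k + 2) ≠ 0 := s_ne_zero (by omega)
  have hden : T * s (k + 1) - 2 * (U * s k) ≠ 0 := by
    intro hc; apply h2m; rw [h2, hc, mul_zero]
  have hlden : 2 * (U * s k / s (k + 1)) - T ≠ 0 := by
    intro hc
    apply hden
    have : (2 * (U * s k) - T * s (k + 1)) / s (k + 1) = 0 := by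
      rw [← hc]; field_simp
    have h4 : 2 * (U * s k) - T * s (k + 1) = 0 := by
      rcases div_eq_zero_iff.mp this with h' | h'
      · exact h'
      · exact absurd h' hq
    linear_combination -h4
  rw [F, h1, h2, div_eq_div_iff hlden (mul_ne_zero hq hden)]
  field_simp
  ring

lemma iter_eq (n : ℕ) : F^[n] 0 = U * s (2 ^ n - 1) / s (2 ^ n) := by
  induction n with
  | zero => simp [s]
  | succ n ih =>
      obtain ⟨k, hk⟩ : ∃ k, 2 ^ n = k + 1 :=
        ⟨2 ^ n - 1, by have := Nat.one_le_two_pow (n := n); omega⟩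
      rw [Function.iterate_succ_apply', ih, hk, Nat.add_sub_cancel, F_step k]
      have e1 : 2 ^ (n + 1) - 1 = 2 * k + 1 := by rw [pow_succ]; omega
      have e2 : 2 ^ (n + 1) = 2 * k + 2 := by rw [pow_succ]; omega
      rw [e1, e2]

theorem stmt_8 (n : ℕ) :
    F^[n] 0 = cfList ((List.range (2 ^ n)).map a) := by
  rw [iter_eq, cf_val (2 ^ n) Nat.one_le_two_pow]

end Paper
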